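/- arXiv:1605.09204 — 3 statements merged into one kernel-verified Lean document; each statement's English description precedes it below -/
import Mathlib

section
/- For every m-times continuously differentiable function f on [1,∞), every positive integer n, and every nonnegative integer m: Σ_{k=1}^n (-1)^{k+1} f(k) = (-1)^n Σ_{k=0}^m (-1)^k ((2^{k+1}-1) B_{k+1}/(k+1)!) f^{(k)}(n) - Σ_{k=0}^m ((2^{k+1}-1) B_{k+1}/(k+1)!) f^{(k)}(1) + ((-1)^m/(2·m!)) ∫_1^n (-1)^{⌊t⌋} E_m({t}) f^{(m+1)}(t) dt. -/
open Finset

/-- Unsigned Stirling numbers of the first kind. -/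
def stirling1 : ℕ → ℕ → ℕ
  | 0, 0 => 1
  | 0, _ + 1 => 0
  | _ + 1, 0 => 0
  | k + 1, l + 1 => stirling1 k l + k * stirling1 k (l + 1)

/-- The Bernoulli polynomial `B_n` evaluated at a real point. -/
noncomputable def bernoulliPoly (n : ℕ) (x : ℝ) : ℝ :=
  ((Polynomial.bernoulli n).map (algebraMap ℚ ℝ)).eval x

/-- The Euler polynomial `E_n` evaluated at a real point. -/
noncomputable def eulerPoly (n : ℕ) (x : ℝ) : ℝ :=
  2 / (n + 1) * (bernoulliPoly (n + 1) x - 2 ^ (n + 1) * bernoulliPoly (n + 1) (x / 2))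

lemma continuous_bernoulliPoly (n : ℕ) : Continuous (bernoulliPoly n) :=
  Polynomial.continuous _

lemma bernoulliPoly_ratCast (n : ℕ) (q : ℚ) :
    bernoulliPoly n (q : ℝ) = (((Polynomial.bernoulli n).eval q : ℚ) : ℝ) := by
  have : ((q : ℝ)) = algebraMap ℚ ℝ q := by norm_num [algebraMap]
  rw [bernoulliPoly, this, Polynomial.eval_map, Polynomial.eval₂_at_apply]
  rfl

lemma bernoulliPoly_zero_eval (n : ℕ) : bernoulliPoly n 0 = (bernoulli n : ℝ) := by
  have := bernoulliPoly_ratCast n 0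
  simpa using this

lemma bernoulliPoly_one_eval (n : ℕ) (hn : n ≠ 1) : bernoulliPoly n 1 = (bernoulli n : ℝ) := by
  have := bernoulliPoly_ratCast n 1
  rw [Polynomial.bernoulli_eval_one] at this
  rw [bernoulli_eq_bernoulli'_of_ne_one hn]
  simpa using this

lemma hasDerivAt_bernoulliPoly (n : ℕ) (x : ℝ) :
    HasDerivAt (bernoulliPoly (n + 1)) ((n + 1) * bernoulliPoly n x) x := by
  have h := ((Polynomial.bernoulli (n+1)).map (algebraMap ℚ ℝ)).hasDerivAt x
  refine h.congr_deriv ?_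
  rw [Polynomial.derivative_map, Polynomial.derivative_bernoulli_add_one]
  simp [bernoulliPoly, Polynomial.map_mul]

lemma integral_bernoulliPoly (n : ℕ) (hn : 1 ≤ n) :
    ∫ x in (0:ℝ)..1, bernoulliPoly n x = 0 := by
  have h : ∀ x ∈ Set.uIcc (0:ℝ) 1,
      HasDerivAt (fun y => bernoulliPoly (n+1) y / (n+1)) (bernoulliPoly n x) x := by
    intro x _
    have := (hasDerivAt_bernoulliPoly n x).div_const ((n:ℝ)+1)
    have hne : ((n:ℝ)+1) ≠ 0 := by positivity
    refine this.congr_deriv ?_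
    field_simp
  rw [intervalIntegral.integral_eq_sub_of_hasDerivAt h
    ((continuous_bernoulliPoly n).intervalIntegrable _ _)]
  rw [bernoulliPoly_one_eval (n+1) (by omega), bernoulliPoly_zero_eval]
  simp

lemma bernoulliPoly_mult (n : ℕ) (x : ℝ) :
    bernoulliPoly n (x / 2) + bernoulliPoly n ((x + 1) / 2) = 2 / 2 ^ n * bernoulliPoly n x := by
  induction n generalizing x with
  | zero =>
    norm_num [bernoulliPoly]
  | succ n ih =>
    set g : ℝ → ℝ := fun y =>
      bernoulliPoly (n+1) (y / 2) + bernoulliPoly (n+1) ((y + 1) / 2)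
        - 2 / 2 ^ (n+1) * bernoulliPoly (n+1) y with hg
    have hderiv : ∀ y : ℝ, HasDerivAt g 0 y := by
      intro y
      have h1 : HasDerivAt (fun y : ℝ => bernoulliPoly (n+1) (y / 2))
          (((n:ℝ)+1) * bernoulliPoly n (y/2) * (1/2)) y := by
        have := (hasDerivAt_bernoulliPoly n (y/2)).comp y ((hasDerivAt_id y).div_const 2)
        simpa [Function.comp_def] using this
      have h2 : HasDerivAt (fun y : ℝ => bernoulliPoly (n+1) ((y + 1) / 2))
          (((n:ℝ)+1) * bernoulliPoly n ((y+1)/2) * (1/2)) y := by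
        have := (hasDerivAt_bernoulliPoly n ((y+1)/2)).comp y
          (((hasDerivAt_id y).add_const 1).div_const 2)
        simpa [Function.comp_def] using this
      have h3 : HasDerivAt (fun y : ℝ => 2 / 2 ^ (n+1) * bernoulliPoly (n+1) y)
          (2 / 2 ^ (n+1) * (((n:ℝ)+1) * bernoulliPoly n y)) y :=
        (hasDerivAt_bernoulliPoly n y).const_mul _
      have h := (h1.add h2).sub h3
      refine h.congr_deriv ?_
      symm
      have hiy := ih y
      have h2n : (2:ℝ) ^ n ≠ 0 := by positivity
      field_simp at hiy ⊢
      rw [pow_succ]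
      linear_combination (-2 * ((n:ℝ)+1)) * hiy
    have hconst : ∀ y : ℝ, g y = g x := fun y =>
      is_const_of_deriv_eq_zero (fun z => (hderiv z).differentiableAt)
        (fun z => (hderiv z).deriv) y x
    have hint : ∫ y in (0:ℝ)..1, g y = 0 := by
      have e1 : ∫ y in (0:ℝ)..1, bernoulliPoly (n+1) (y / 2)
          = 2 * ∫ y in (0:ℝ)..(1/2:ℝ), bernoulliPoly (n+1) y := by
        rw [intervalIntegral.integral_comp_div (f := bernoulliPoly (n+1)) (two_ne_zero)]
        norm_num
      have e2 : ∫ y in (0:ℝ)..1, bernoulliPoly (n+1) ((y + 1) / 2)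
          = 2 * ∫ y in (1/2:ℝ)..1, bernoulliPoly (n+1) y := by
        rw [show (fun y : ℝ => bernoulliPoly (n+1) ((y+1)/2)) = fun y : ℝ => (fun z : ℝ => bernoulliPoly (n+1) (z/2)) (y + 1) from rfl]
        rw [intervalIntegral.integral_comp_add_right (fun z : ℝ => bernoulliPoly (n+1) (z/2)) 1]
        rw [intervalIntegral.integral_comp_div (f := bernoulliPoly (n+1)) (two_ne_zero)]
        norm_num
      have e3 : (∫ y in (0:ℝ)..(1/2:ℝ), bernoulliPoly (n+1) y)
          + ∫ y in (1/2:ℝ)..1, bernoulliPoly (n+1) y = 0 := by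
        rw [intervalIntegral.integral_add_adjacent_intervals
          ((continuous_bernoulliPoly _).intervalIntegrable _ _)
          ((continuous_bernoulliPoly _).intervalIntegrable _ _)]
        exact integral_bernoulliPoly (n+1) (by omega)
      have hg0 : ∫ y in (0:ℝ)..1, g y
          = (∫ y in (0:ℝ)..1, bernoulliPoly (n+1) (y / 2))
            + (∫ y in (0:ℝ)..1, bernoulliPoly (n+1) ((y + 1) / 2))
            - 2 / 2 ^ (n+1) * ∫ y in (0:ℝ)..1, bernoulliPoly (n+1) y := by
        rw [hg]
        rw [intervalIntegral.integral_sub, intervalIntegral.integral_add,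
          intervalIntegral.integral_const_mul]
        · exact ((continuous_bernoulliPoly _).comp (continuous_id.div_const 2)).intervalIntegrable _ _
        · exact ((continuous_bernoulliPoly _).comp
            ((continuous_id.add continuous_const).div_const 2)).intervalIntegrable _ _
        · exact (((continuous_bernoulliPoly _).comp (continuous_id.div_const 2)).add
            ((continuous_bernoulliPoly _).comp
            ((continuous_id.add continuous_const).div_const 2))).intervalIntegrable _ _
        · exact (continuous_const.mul (continuous_bernoulliPoly _)).intervalIntegrable _ _
      rw [hg0, e1, e2, integral_bernoulliPoly (n+1) (by omega)]
      linarith [e3]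
    have : ∫ y in (0:ℝ)..1, g y = g x := by
      rw [intervalIntegral.integral_congr (g := fun _ => g x) (fun y _ => hconst y)]
      simp
    have hx : g x = 0 := by rw [← this, hint]
    rw [hg] at hx
    simp only at hx
    linarith [hx]

lemma bernoulliPoly_half (n : ℕ) :
    bernoulliPoly n (1/2) = (2 / 2 ^ n - 1) * (bernoulli n : ℝ) := by
  have h := bernoulliPoly_mult n 0
  norm_num at h
  rw [bernoulliPoly_zero_eval] at h
  have h2n : (2:ℝ) ^ n ≠ 0 := by positivity
  rw [show ((1:ℝ)/2) = (2:ℝ)⁻¹ by norm_num] at h ⊢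
  field_simp at h ⊢
  linear_combination h

noncomputable def bcoef (k : ℕ) : ℝ :=
  (2 ^ (k + 1) - 1) * (bernoulli (k + 1) : ℝ) / (Nat.factorial (k + 1))

lemma continuous_eulerPoly (n : ℕ) : Continuous (eulerPoly n) := by
  unfold eulerPoly
  exact continuous_const.mul ((continuous_bernoulliPoly _).sub
    (continuous_const.mul ((continuous_bernoulliPoly _).comp (continuous_id.div_const 2))))

lemma hasDerivAt_eulerPoly (m : ℕ) (x : ℝ) :
    HasDerivAt (eulerPoly (m + 1)) (((m:ℝ) + 1) * eulerPoly m x) x := by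
  have h1 : HasDerivAt (fun y : ℝ => bernoulliPoly (m+2) y)
      (((m:ℝ)+2) * bernoulliPoly (m+1) x) x := by
    have := hasDerivAt_bernoulliPoly (m+1) x
    convert this using 1 <;> push_cast <;> ring
  have h2 : HasDerivAt (fun y : ℝ => bernoulliPoly (m+2) (y / 2))
      (((m:ℝ)+2) * bernoulliPoly (m+1) (x/2) * (1/2)) x := by
    have := (hasDerivAt_bernoulliPoly (m+1) (x/2)).comp x ((hasDerivAt_id x).div_const 2)
    exact this.congr_deriv (by push_cast; ring)
  have h := ((h1.sub (h2.const_mul ((2:ℝ)^(m+2)))).const_mul (2 / ((m:ℝ)+1+1)))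
  have hkey : HasDerivAt (eulerPoly (m+1))
      (2 / ((m:ℝ)+1+1) * (((m:ℝ)+2) * bernoulliPoly (m+1) x
        - 2^(m+2) * (((m:ℝ)+2) * bernoulliPoly (m+1) (x/2) * (1/2)))) x := by
    refine h.congr_of_eventuallyEq (Filter.Eventually.of_forall fun y => ?_)
    · unfold eulerPoly
      push_cast
      norm_num
  convert hkey using 1
  unfold eulerPoly
  have hm2 : ((m:ℝ)+2) ≠ 0 := by positivity
  have hm1 : ((m:ℝ)+1) ≠ 0 := by positivity
  push_cast
  field_simp
  ring

lemma eulerPoly_zero_eval (m : ℕ) :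
    eulerPoly m 0 = -2 * (Nat.factorial m) * bcoef m := by
  unfold eulerPoly bcoef
  norm_num [bernoulliPoly_zero_eval]
  have h1 : ((m:ℝ)+1) ≠ 0 := by positivity
  have h2 : ((Nat.factorial (m+1) : ℝ)) ≠ 0 := by positivity
  have h3 : ((Nat.factorial (m+1) : ℝ)) = ((m:ℝ)+1) * (Nat.factorial m : ℝ) := by
    push_cast [Nat.factorial_succ]; ring
  rw [h3]
  field_simp
  ring

lemma eulerPoly_one_eval (m : ℕ) (hm : 1 ≤ m) :
    eulerPoly m 1 = 2 * (Nat.factorial m) * bcoef m := by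
  unfold eulerPoly bcoef
  rw [bernoulliPoly_one_eval (m+1) (by omega), show ((1:ℝ)/2) = ((1:ℝ)/2) from rfl,
    bernoulliPoly_half (m+1)]
  have h1 : ((m:ℝ)+1) ≠ 0 := by positivity
  have h3 : ((Nat.factorial (m+1) : ℝ)) = ((m:ℝ)+1) * (Nat.factorial m : ℝ) := by
    push_cast [Nat.factorial_succ]; ring
  have h2 : ((Nat.factorial m : ℝ)) ≠ 0 := by positivity
  have h4 : (2:ℝ)^(m+1) ≠ 0 := by positivity
  rw [h3]
  field_simp
  ring

lemma eulerPoly_zero_fun (x : ℝ) : eulerPoly 0 x = 1 := by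
  unfold eulerPoly
  have h1 : bernoulliPoly 1 x = x - 1/2 := by
    simp [bernoulliPoly, Polynomial.bernoulli, Finset.sum_range_succ, bernoulli_one]
    norm_num
    ring
  have h2 : bernoulliPoly 1 (x/2) = x/2 - 1/2 := by
    simp [bernoulliPoly, Polynomial.bernoulli, Finset.sum_range_succ, bernoulli_one]
    norm_num
    ring
  rw [h1, h2]
  norm_num
  ring

section Key

variable {f : ℝ → ℝ}

lemma hD (hf : ContDiff ℝ (⊤ : ℕ∞) f) (k : ℕ) (x : ℝ) :
    HasDerivAt (iteratedDeriv k f) (iteratedDeriv (k + 1) f x) x := by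
  have hdiff : Differentiable ℝ (iteratedDeriv k f) :=
    hf.differentiable_iteratedDeriv k (by exact_mod_cast lt_top_iff_ne_top.mpr (by simp))
  have := (hdiff x).hasDerivAt
  rwa [show deriv (iteratedDeriv k f) x = iteratedDeriv (k+1) f x by
    rw [iteratedDeriv_succ]] at this

lemma hC (hf : ContDiff ℝ (⊤ : ℕ∞) f) (k : ℕ) : Continuous (iteratedDeriv k f) :=
  hf.continuous_iteratedDeriv k (by exact_mod_cast le_top)

lemma boole_key (hf : ContDiff ℝ (⊤ : ℕ∞) f) (a : ℝ) (m : ℕ) :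
    f (a + 1) + ∑ k ∈ Finset.range (m + 1),
        (-1:ℝ)^k * bcoef k * (iteratedDeriv k f (a+1) + iteratedDeriv k f a)
      = (-1:ℝ)^m / (2 * Nat.factorial m) *
          ∫ t in a..(a+1), eulerPoly m (t - a) * iteratedDeriv (m+1) f t := by
  induction m with
  | zero =>
    have hb0 : bcoef 0 = -1/2 := by
      unfold bcoef
      rw [bernoulli_one]
      norm_num
    have hint : ∫ t in a..(a+1), eulerPoly 0 (t - a) * iteratedDeriv 1 f t
        = f (a+1) - f a := by
      rw [intervalIntegral.integral_congr
        (g := fun t => iteratedDeriv 1 f t)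
        (fun t _ => by rw [eulerPoly_zero_fun, one_mul])]
      rw [intervalIntegral.integral_eq_sub_of_hasDerivAt
        (f := f) (fun x _ => by simpa [iteratedDeriv_one] using hD hf 0 x)
        ((hC hf 1).intervalIntegrable _ _)]
    rw [hint]
    simp [hb0, iteratedDeriv_zero]
    ring
  | succ m ih =>
    have hv := hD hf (m+1)
    set v := iteratedDeriv (m+1) f with hvdef
    set I : ℝ := ∫ t in a..(a+1), eulerPoly m (t - a) * iteratedDeriv (m+1) f t with hI
    set J : ℝ := ∫ t in a..(a+1), eulerPoly (m+1) (t - a) * iteratedDeriv (m+2) f t with hJ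
    have hparts : ∫ t in a..(a+1), (fun t => eulerPoly (m+1) (t - a)) t * iteratedDeriv (m+2) f t
        = eulerPoly (m+1) 1 * v (a+1) - eulerPoly (m+1) 0 * v a
          - ∫ t in a..(a+1), (((m:ℝ)+1) * eulerPoly m (t - a)) * v t := by
      have := intervalIntegral.integral_mul_deriv_eq_deriv_mul
        (u := fun t => eulerPoly (m+1) (t - a)) (v := v)
        (u' := fun t => ((m:ℝ)+1) * eulerPoly m (t - a))
        (v' := iteratedDeriv (m+2) f)
        (a := a) (b := a+1)
        (fun x _ => by
          have := (hasDerivAt_eulerPoly m (x - a)).comp x ((hasDerivAt_id x).sub_const a)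
          simpa [Function.comp_def] using this)
        (fun x _ => hv x)
        ((continuous_const.mul ((continuous_eulerPoly m).comp
          (continuous_id.sub continuous_const))).intervalIntegrable _ _)
        ((hC hf (m+2)).intervalIntegrable _ _)
      rw [this]
      congr 2 <;> simp
    have h2 : ∫ t in a..(a+1), ((m:ℝ)+1) * eulerPoly m (t - a) * v t = ((m:ℝ)+1) * I := by
      rw [hI, ← intervalIntegral.integral_const_mul]
      apply intervalIntegral.integral_congr
      intro t _
      ring
    have h3 : (∫ t in a..(a+1), (fun t => eulerPoly (m+1) (t - a)) t * iteratedDeriv (m+2) f t) = J := by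
      rw [hJ]
    rw [h3, h2] at hparts
    have hIJ : ((m:ℝ)+1) * I = eulerPoly (m+1) 1 * v (a+1) - eulerPoly (m+1) 0 * v a - J := by
      linarith [hparts]
    rw [eulerPoly_one_eval (m+1) (by omega), eulerPoly_zero_eval (m+1)] at hIJ
    rw [Finset.sum_range_succ, ← add_assoc]
    rw [show f (a + 1) + ∑ k ∈ Finset.range (m + 1),
        (-1:ℝ)^k * bcoef k * (iteratedDeriv k f (a+1) + iteratedDeriv k f a)
      = (-1:ℝ)^m / (2 * Nat.factorial m) * I from ih]
    have hfac1 : ((Nat.factorial (m+1) : ℝ)) = ((m:ℝ)+1) * (Nat.factorial m : ℝ) := by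
      push_cast [Nat.factorial_succ]; ring
    have hm1 : ((m:ℝ)+1) ≠ 0 := by positivity
    have hm0 : ((Nat.factorial m : ℝ)) ≠ 0 := by positivity
    rw [hfac1] at hIJ
    rw [show ((m+1) : ℕ).factorial = (m+1) * Nat.factorial m from Nat.factorial_succ m]
    rw [pow_succ]
    linear_combination (norm := (push_cast; field_simp; ring))
      ((-1:ℝ)^m/(2*((m:ℝ)+1)*((Nat.factorial m : ℕ) : ℝ))) * hIJ

end Key

open MeasureTheory in
lemma ae_ne_real (c : ℝ) : ∀ᵐ t : ℝ, t ≠ c := by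
  rw [MeasureTheory.ae_iff]
  convert MeasureTheory.measure_singleton (μ := MeasureTheory.volume) c using 2
  ext t
  simp

lemma floor_on_interval (j : ℕ) {t : ℝ} (h1 : (j:ℝ) ≤ t) (h2 : t < (j:ℝ)+1) : ⌊t⌋ = (j:ℤ) := by
  rw [Int.floor_eq_iff]
  constructor
  · exact_mod_cast h1
  · exact_mod_cast h2

section Main

variable {f : ℝ → ℝ}

lemma integrand_congr (m : ℕ) (j : ℕ) {t : ℝ} (h1 : (j:ℝ) ≤ t) (h2 : t < (j:ℝ)+1) :
    (-1:ℝ)^(⌊t⌋) * eulerPoly m (Int.fract t) * iteratedDeriv (m+1) f t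
      = (-1:ℝ)^j * (eulerPoly m (t - (j:ℝ)) * iteratedDeriv (m+1) f t) := by
  have hfl : ⌊t⌋ = (j:ℤ) := floor_on_interval j h1 h2
  rw [Int.fract, hfl]
  push_cast
  rw [zpow_natCast]
  ring

lemma int_congr (m : ℕ) (j : ℕ) :
    (∫ t in (j:ℝ)..((j:ℝ)+1), (-1:ℝ)^(⌊t⌋) * eulerPoly m (Int.fract t) * iteratedDeriv (m+1) f t)
      = (-1:ℝ)^j * ∫ t in (j:ℝ)..((j:ℝ)+1), eulerPoly m (t - (j:ℝ)) * iteratedDeriv (m+1) f t := by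
  rw [← intervalIntegral.integral_const_mul]
  apply intervalIntegral.integral_congr_ae
  filter_upwards [ae_ne_real ((j:ℝ)+1)] with t ht htmem
  rw [Set.uIoc_of_le (by linarith)] at htmem
  exact integrand_congr m j (le_of_lt htmem.1) (lt_of_le_of_ne htmem.2 ht)

lemma intF_integrable (hf : ContDiff ℝ (⊤ : ℕ∞) f) (m : ℕ) (j : ℕ) :
    IntervalIntegrable
      (fun t => (-1:ℝ)^(⌊t⌋) * eulerPoly m (Int.fract t) * iteratedDeriv (m+1) f t)
      MeasureTheory.volume (j:ℝ) ((j:ℝ)+1) := by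
  have hcont : Continuous (fun t : ℝ =>
      (-1:ℝ)^j * (eulerPoly m (t - (j:ℝ)) * iteratedDeriv (m+1) f t)) :=
    continuous_const.mul (((continuous_eulerPoly m).comp
      (continuous_id.sub continuous_const)).mul (hC hf (m+1)))
  apply (hcont.intervalIntegrable _ _).congr_ae
  have h1 := MeasureTheory.ae_restrict_of_ae
    (μ := MeasureTheory.volume) (s := Set.uIoc (j:ℝ) ((j:ℝ)+1)) (ae_ne_real ((j:ℝ)+1))
  have h2 := MeasureTheory.ae_restrict_mem
    (μ := MeasureTheory.volume) (measurableSet_uIoc (a := (j:ℝ)) (b := (j:ℝ)+1))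
  filter_upwards [h1, h2] with t ht htmem
  rw [Set.uIoc_of_le (by linarith)] at htmem
  exact (integrand_congr m j (le_of_lt htmem.1) (lt_of_le_of_ne htmem.2 ht)).symm

lemma intF_integrable' (hf : ContDiff ℝ (⊤ : ℕ∞) f) (m : ℕ) (n : ℕ) (hn : 1 ≤ n) :
    IntervalIntegrable
      (fun t => (-1:ℝ)^(⌊t⌋) * eulerPoly m (Int.fract t) * iteratedDeriv (m+1) f t)
      MeasureTheory.volume (1:ℝ) (n:ℝ) := by
  induction n with
  | zero => omega
  | succ n ih =>
    rcases Nat.eq_or_lt_of_le hn with h | h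
    · simp [← h]
    · have h1 : 1 ≤ n := by omega
      have := (ih h1).trans (b := (n:ℝ)) (c := (n:ℝ)+1) (intF_integrable hf m n)
      convert this using 2
      push_cast
      ring

lemma bcoef_cancel (k : ℕ) (hk : k ≠ 0) : ((-1:ℝ)^k + 1) * bcoef k = 0 := by
  rcases Nat.even_or_odd k with he | ho
  · have hodd : Odd (k+1) := Even.add_one he
    have hb : bernoulli (k+1) = 0 := by
      rw [bernoulli_eq_bernoulli'_of_ne_one (by omega)]
      exact bernoulli'_eq_zero_of_odd hodd (by omega)
    unfold bcoef
    rw [hb]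
    norm_num
  · rw [ho.neg_one_pow]
    ring_nf

end Main


/-- Boole summation formula with remainder. -/
theorem boole_summation (f : ℝ → ℝ) (hf : ContDiff ℝ (⊤ : ℕ∞) f) (n : ℕ) (hn : 1 ≤ n) (m : ℕ) :
    ∑ k ∈ Finset.Icc 1 n, (-1 : ℝ) ^ (k + 1) * f k =
      (-1) ^ n * ∑ k ∈ Finset.range (m + 1),
          (-1) ^ k * ((2 ^ (k + 1) - 1) * (bernoulli (k + 1) : ℝ) / (Nat.factorial (k + 1)))
            * iteratedDeriv k f n
      - ∑ k ∈ Finset.range (m + 1),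
          ((2 ^ (k + 1) - 1) * (bernoulli (k + 1) : ℝ) / (Nat.factorial (k + 1)))
            * iteratedDeriv k f 1
      + (-1) ^ m / (2 * Nat.factorial m) *
          ∫ t in (1:ℝ)..(n:ℝ), (-1 : ℝ) ^ (⌊t⌋) * eulerPoly m (Int.fract t)
            * iteratedDeriv (m + 1) f t := by
  have hb : ∀ k : ℕ, (2 ^ (k + 1) - 1) * (bernoulli (k + 1) : ℝ) / (Nat.factorial (k + 1))
      = bcoef k := fun k => rfl
  simp only [hb]
  induction n with
  | zero => omega
  | succ n ihn =>
    rcases Nat.lt_or_ge n 1 with h1 | h1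
    · -- base case : n = 0, i.e. n+1 = 1
      have hn0 : n = 0 := by omega
      subst hn0
      norm_num
      have hsum : ∑ k ∈ Finset.range (m+1), (((-1:ℝ)^k + 1) * bcoef k) * iteratedDeriv k f 1
          = -f 1 := by
        rw [Finset.sum_eq_single_of_mem 0 (Finset.mem_range.mpr (by omega))]
        · have : bcoef 0 = -1/2 := by unfold bcoef; rw [bernoulli_one]; norm_num
          simp [this]
          ring
        · intro k _ hk
          rw [bcoef_cancel k hk]
          ring
      have hsum2 : (∑ k ∈ Finset.range (m+1), (-1:ℝ)^k * bcoef k * iteratedDeriv k f 1)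
          + ∑ k ∈ Finset.range (m+1), bcoef k * iteratedDeriv k f 1 = -f 1 := by
        rw [← Finset.sum_add_distrib, ← hsum]
        apply Finset.sum_congr rfl
        intro k _
        ring
      linarith [hsum2]
    · -- inductive step
      have hIH := ihn h1
      have hsplit := intervalIntegral.integral_add_adjacent_intervals
        (intF_integrable' hf m n h1) (intF_integrable hf m n)
      have hcongr := int_congr (f := f) m n
      have hkey := boole_key hf (n:ℝ) m
      have hkeysum : ∑ k ∈ Finset.range (m+1),
            (-1:ℝ)^k * bcoef k * (iteratedDeriv k f ((n:ℝ)+1) + iteratedDeriv k f (n:ℝ))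
          = (∑ k ∈ Finset.range (m+1), (-1:ℝ)^k * bcoef k * iteratedDeriv k f ((n:ℝ)+1))
            + ∑ k ∈ Finset.range (m+1), (-1:ℝ)^k * bcoef k * iteratedDeriv k f (n:ℝ) := by
        rw [← Finset.sum_add_distrib]
        apply Finset.sum_congr rfl
        intro k _
        ring
      rw [hkeysum] at hkey
      rw [Finset.sum_Icc_succ_top (by omega)]
      push_cast
      push_cast at hIH hsplit hcongr hkey
      rw [← hsplit, hcongr]
      linear_combination hIH + ((-1:ℝ))^n * hkey
end

section
/- Let a_k = ⌊1/2 + √(2k)⌋ be the self-counting sequence 1,2,2,3,3,3,4,4,4,4,… . Then for every positive real x: Σ_{k=1}^{⌊x⌋} a_k = (x√(8x+1))/3 - (5√(8x+1))/24 - (√(8x+1)/2)·B_1({x}) + B_1({y})·B_1({x}) + (1/2)B_1({y}) - (√(8x+1)/4)·B_2({y}) + (1/6)B_3({y}), where y = (√(8x+1) - 1)/2 and {·} denotes the fractional part. -/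
/-!
The value `m + 1` occupies exactly the positions `T m < k ≤ T (m + 1)`, where
`T m = (m + 1).choose 2 = m (m + 1) / 2` is the `m`-th triangular number. Hence for
`T m ≤ n ≤ T (m + 1)` the partial sum is `(m + 1) n - m (m + 1) (m + 2) / 6`.
Writing `x = y (y + 1) / 2`, i.e. `y = (√(8x + 1) - 1) / 2`, gives `T ⌊y⌋ ≤ ⌊x⌋ ≤ T (⌊y⌋ + 1)`;
substituting `n = x - {x}` and `m = y - {y}` and expanding the Bernoulli polynomials, the claim
becomes a polynomial identity in `y`, `{x}` and `{y}`.
-/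

open Finset

lemma bernoulliPoly_eq_sum (n : ℕ) (t : ℝ) :
    bernoulliPoly n t = ∑ i ∈ range (n + 1), (bernoulli i * n.choose i : ℝ) * t ^ (n - i) := by
  simp [bernoulliPoly, Polynomial.bernoulli]

lemma bernoulliPoly_one (t : ℝ) : bernoulliPoly 1 t = t - 1 / 2 := by
  rw [bernoulliPoly_eq_sum]
  norm_num [sum_range_succ]
  ring

lemma bernoulliPoly_two (t : ℝ) : bernoulliPoly 2 t = t ^ 2 - t + 1 / 6 := by
  rw [bernoulliPoly_eq_sum]
  norm_num [sum_range_succ]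
  ring

lemma bernoulliPoly_three (t : ℝ) : bernoulliPoly 3 t = t ^ 3 - 3 / 2 * t ^ 2 + 1 / 2 * t := by
  rw [bernoulliPoly_eq_sum]
  norm_num [sum_range_succ, bernoulli_eq_bernoulli'_of_ne_one, bernoulli'_three]
  ring

noncomputable def selfCounting (k : ℕ) : ℕ := ⌊1 / 2 + √(2 * k)⌋₊

lemma cast_choose_two_succ (m : ℕ) : ((m + 1).choose 2 : ℝ) = m * (m + 1) / 2 := by
  rw [Nat.cast_choose_two]
  push_cast
  ring

lemma choose_two_succ_succ (m : ℕ) : (m + 2).choose 2 = (m + 1).choose 2 + (m + 1) := by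
  rw [Nat.choose_succ_succ', Nat.choose_one_right, add_comm]

lemma selfCounting_eq {m k : ℕ} (h₁ : (m + 1).choose 2 < k) (h₂ : k ≤ (m + 2).choose 2) :
    selfCounting k = m + 1 := by
  have hk₁ : (m : ℝ) * (m + 1) / 2 + 1 ≤ k := by
    rw [← cast_choose_two_succ]; exact_mod_cast h₁
  have hk₂ : (k : ℝ) ≤ (m + 1) * (m + 2) / 2 := by
    have : (k : ℝ) ≤ ((m + 1 + 1).choose 2 : ℕ) := by exact_mod_cast h₂
    rw [cast_choose_two_succ] at this; push_cast at this; linarith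
  have hlow : (m : ℝ) + 1 / 2 ≤ √(2 * k) := Real.le_sqrt_of_sq_le (by nlinarith)
  have hhigh : √(2 * k) < m + 3 / 2 := (Real.sqrt_lt' (by positivity)).2 (by nlinarith)
  rw [selfCounting, Nat.floor_eq_iff (by positivity)]
  push_cast
  constructor <;> linarith

lemma sum_Ioc_selfCounting {m n : ℕ} (h₁ : (m + 1).choose 2 ≤ n) (h₂ : n ≤ (m + 2).choose 2) :
    ∑ k ∈ Ioc ((m + 1).choose 2) n, (selfCounting k : ℝ) = (m + 1) * (n - (m + 1).choose 2) := by
  rw [sum_congr rfl fun k hk => by rw [selfCounting_eq (mem_Ioc.1 hk).1 ((mem_Ioc.1 hk).2.trans h₂)],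
    sum_const, Nat.card_Ioc, nsmul_eq_mul, Nat.cast_sub h₁]
  push_cast
  ring

lemma sum_Icc_selfCounting {m n : ℕ} (h₁ : (m + 1).choose 2 ≤ n) (h₂ : n ≤ (m + 2).choose 2) :
    ∑ k ∈ Icc 1 n, (selfCounting k : ℝ) = (m + 1) * n - m * (m + 1) * (m + 2) / 6 := by
  rw [show Icc 1 n = Ioc 0 n from Icc_add_one_left_eq_Ioc 0 n]
  induction m generalizing n with
  | zero => simpa using sum_Ioc_selfCounting (m := 0) h₁ h₂
  | succ m ih =>
    have hT : (m + 1).choose 2 ≤ (m + 2).choose 2 := by rw [choose_two_succ_succ]; omega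
    rw [← sum_Ioc_consecutive _ (Nat.zero_le _) h₁, ih hT le_rfl, sum_Ioc_selfCounting h₁ h₂,
      choose_two_succ_succ]
    push_cast
    rw [cast_choose_two_succ]
    ring

lemma fract_eq_sub_natFloor {a : ℝ} (ha : 0 ≤ a) : Int.fract a = a - ⌊a⌋₊ := by
  rw [Int.fract, natCast_floor_eq_intCast_floor ha]

lemma floor_mem_triangular {y : ℝ} (hy : 0 ≤ y) :
    (⌊y⌋₊ + 1).choose 2 ≤ ⌊y * (y + 1) / 2⌋₊ ∧ ⌊y * (y + 1) / 2⌋₊ ≤ (⌊y⌋₊ + 2).choose 2 := by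
  have hle : (⌊y⌋₊ : ℝ) ≤ y := Nat.floor_le hy
  have hlt : y < ⌊y⌋₊ + 1 := Nat.lt_floor_add_one y
  constructor
  · exact Nat.le_floor (by rw [cast_choose_two_succ]; gcongr)
  · refine Nat.floor_le_of_le ?_
    rw [cast_choose_two_succ]
    push_cast
    nlinarith

/-- The self-counting summation formula. -/
theorem self_counting_sum (x : ℝ) (hx : 0 < x) :
    ∑ k ∈ Finset.Icc 1 (Nat.floor x), (Nat.floor (1 / 2 + Real.sqrt (2 * k)) : ℝ) =
      x * Real.sqrt (8 * x + 1) / 3 - 5 * Real.sqrt (8 * x + 1) / 24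
      - (Real.sqrt (8 * x + 1) / 2) * bernoulliPoly 1 (Int.fract x)
      + bernoulliPoly 1 (Int.fract ((Real.sqrt (8 * x + 1) - 1) / 2)) * bernoulliPoly 1 (Int.fract x)
      + (1 / 2) * bernoulliPoly 1 (Int.fract ((Real.sqrt (8 * x + 1) - 1) / 2))
      - (Real.sqrt (8 * x + 1) / 4) * bernoulliPoly 2 (Int.fract ((Real.sqrt (8 * x + 1) - 1) / 2))
      + (1 / 6) * bernoulliPoly 3 (Int.fract ((Real.sqrt (8 * x + 1) - 1) / 2)) := by
  set y := (√(8 * x + 1) - 1) / 2 with hy_def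
  have hs : √(8 * x + 1) = 2 * y + 1 := by rw [hy_def]; ring
  have hy : 0 ≤ y := by
    have : 1 ≤ √(8 * x + 1) := Real.one_le_sqrt.2 (by linarith)
    linarith
  have hxy : x = y * (y + 1) / 2 := by
    have := Real.sq_sqrt (show 0 ≤ 8 * x + 1 by linarith)
    rw [hs] at this
    linarith
  obtain ⟨h₁, h₂⟩ := floor_mem_triangular hy
  rw [← hxy] at h₁ h₂
  change ∑ k ∈ Icc 1 ⌊x⌋₊, (selfCounting k : ℝ) = _
  rw [sum_Icc_selfCounting h₁ h₂, bernoulliPoly_one, bernoulliPoly_one, bernoulliPoly_two,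
    bernoulliPoly_three, fract_eq_sub_natFloor hx.le, fract_eq_sub_natFloor hy, hs]
  linear_combination (⌊y⌋₊ + 2 / 3 - 2 * y / 3) * hxy
end

section
/- For every real a with e^{-2π} < a < e^{2π}, a ≠ 1, and every positive real x: Σ_{k=0}^{⌊x⌋} a^k = a^x/log(a) + 1/(1-a) + a^x·Σ_{k=1}^∞ (-1)^k (log(a)^{k-1}/k!)·B_k({x}), and the series on the right converges absolutely. -/
open Finset

/-! With `t = -log a` and `y = {x}`, the `k`-th term is `(a^x / log a) · B_{k+1}(y) t^{k+1}/(k+1)!`,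
so the series is the Bernoulli generating function `t e^{yt}/(e^t - 1) = ∑ B_n(y) t^n/n!` without
its constant term `1`. Since `e^t = 1/a` and `a^x a^{1-y} = a^{⌊x⌋+1}`, its value is the geometric
expression. The generating series converges absolutely for `|t| < 2π` because the Fourier expansion
of `B_k` on `[0, 1]` gives `|B_k(y)| ≤ 2ζ(2) k!/(2π)^k` for `k ≥ 2`; its sum is identified by the
Cauchy product with `e^t - 1 = ∑ t^{n+1}/(n+1)!` and `∑_{k ≤ n} C(n+1, k) B_k(y) = (n+1) y^n`. -/

open Real Nat

theorem bernoulliPoly_eq_bernoulliFun : bernoulliPoly = bernoulliFun := rfl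

theorem abs_bernoulliFun_le {k : ℕ} (hk : 2 ≤ k) {x : ℝ} (hx : x ∈ Set.Icc (0 : ℝ) 1) :
    |bernoulliFun k x| ≤ π ^ 2 / 3 * k ! / (2 * π) ^ k := by
  have hnorm (n : ℕ) : ‖(1 : ℂ) / (n : ℂ) ^ k *
      (fourier n (x : UnitAddCircle) + (-1 : ℂ) ^ k * fourier (-n) (x : UnitAddCircle))‖
      ≤ 2 * (1 / (n : ℝ) ^ 2) := by
    have hpow : 1 / (n : ℝ) ^ k ≤ 1 / (n : ℝ) ^ 2 := by
      rcases n.eq_zero_or_pos with rfl | hn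
      · simp [zero_pow (by omega : k ≠ 0)]
      · exact one_div_le_one_div_of_le (by positivity)
          (pow_le_pow_right₀ (by exact_mod_cast hn) hk)
    have hfourier : ‖fourier n (x : UnitAddCircle) +
        (-1 : ℂ) ^ k * fourier (-n) (x : UnitAddCircle)‖ ≤ 2 := by
      refine (norm_add_le _ _).trans ?_
      simp only [norm_mul, norm_pow, norm_neg, norm_one, one_pow, one_mul, fourier_apply,
        Circle.norm_coe]
      norm_num
    rw [norm_mul, mul_comm]
    simp only [norm_div, norm_one, norm_pow, Complex.norm_natCast]
    gcongr
  have h := (hasSum_one_div_nat_pow_mul_fourier hk hx).norm_le_of_bounded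
    (hasSum_zeta_two.mul_left 2) hnorm
  rw [norm_mul, norm_div, norm_neg, norm_pow, norm_mul, Complex.norm_I, Complex.norm_mul,
    Complex.norm_ofNat, Complex.norm_real, Real.norm_of_nonneg pi_pos.le, Complex.norm_natCast,
    Complex.norm_real, Real.norm_eq_abs, mul_one, div_mul_eq_mul_div,
    div_le_iff₀ (by positivity)] at h
  rw [le_div_iff₀ (by positivity)]
  linarith

theorem sum_range_choose_mul_bernoulliFun (n : ℕ) (y : ℝ) :
    ∑ k ∈ range (n + 1), ((n + 1).choose k : ℝ) * bernoulliFun k y = (n + 1) * y ^ n := by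
  have h := congrArg (fun p => (p.map (algebraMap ℚ ℝ)).eval y) (Polynomial.sum_bernoulli n)
  simp only [Polynomial.smul_eq_C_mul, map_natCast, Polynomial.map_sum, Polynomial.map_mul,
    Polynomial.map_natCast, Polynomial.eval_finsetSum, Polynomial.eval_mul,
    Polynomial.eval_natCast, Polynomial.eval_map_algebraMap, map_add, Polynomial.map_add,
    Polynomial.map_monomial, eq_ratCast, Rat.cast_one, Polynomial.eval_add,
    Polynomial.eval_monomial, one_mul, bernoulliFun] at h ⊢
  linear_combination h

theorem sum_range_bernoulliFun_div_factorial_mul (n : ℕ) (y : ℝ) :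
    ∑ k ∈ range (n + 1), bernoulliFun k y / (k ! : ℝ) * (1 / (n + 1 - k)!) =
      y ^ n / (n ! : ℝ) := by
  have hchoose : ∀ k ∈ range (n + 1),
      bernoulliFun k y / (k ! : ℝ) * (1 / (n + 1 - k)!) =
        ((n + 1).choose k : ℝ) * bernoulliFun k y / (n + 1)! := fun k hk => by
    rw [cast_choose ℝ (by rw [mem_range] at hk; omega)]
    field_simp
  rw [sum_congr rfl hchoose, ← sum_div, sum_range_choose_mul_bernoulliFun, factorial_succ,
    cast_mul]
  push_cast
  field_simp

theorem summable_abs_bernoulliFun_mul_pow_div_factorial {t : ℝ} (ht : |t| < 2 * π) {y : ℝ}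
    (hy : y ∈ Set.Icc (0 : ℝ) 1) :
    Summable fun n => |bernoulliFun n y * t ^ n / (n ! : ℝ)| := by
  set r := |t| / (2 * π)
  have hr : r < 1 := (div_lt_one (by positivity)).mpr ht
  refine Summable.of_norm_bounded_eventually_nat
    ((summable_geometric_of_lt_one (by positivity) hr).mul_left (π ^ 2 / 3)) ?_
  filter_upwards [Filter.eventually_ge_atTop 2] with n hn
  calc ‖|bernoulliFun n y * t ^ n / (n ! : ℝ)|‖
        = |bernoulliFun n y| * |t| ^ n / (n ! : ℝ) := by simp [abs_div, abs_mul, abs_pow]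
    _ ≤ π ^ 2 / 3 * n ! / (2 * π) ^ n * |t| ^ n / (n ! : ℝ) := by
        gcongr; exact abs_bernoulliFun_le hn hy
    _ = π ^ 2 / 3 * r ^ n := by
        rw [div_pow]; field_simp

theorem hasSum_bernoulliFun_mul_pow_div_factorial {t : ℝ} (ht₀ : t ≠ 0) (ht : |t| < 2 * π)
    {y : ℝ} (hy : y ∈ Set.Icc (0 : ℝ) 1) :
    HasSum (fun n => bernoulliFun n y * t ^ n / (n ! : ℝ)) (t * exp (y * t) / (exp t - 1)) := by
  set f := fun n => bernoulliFun n y * t ^ n / (n ! : ℝ)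
  set g := fun n : ℕ => t ^ (n + 1) / (n + 1)!
  have hf : Summable fun n => ‖f n‖ := summable_abs_bernoulliFun_mul_pow_div_factorial ht hy
  have hexp (s : ℝ) : HasSum (fun n => s ^ n / (n ! : ℝ)) (exp s) := by
    rw [exp_eq_exp_ℝ]; exact NormedSpace.expSeries_div_hasSum_exp s
  have hg : HasSum g (exp t - 1) := by
    simpa using (hasSum_nat_add_iff' 1).mpr (hexp t)
  have hg_norm : Summable fun n => ‖g n‖ := by
    simpa [g, abs_div, abs_pow] using ((hasSum_nat_add_iff' 1).mpr (hexp |t|)).summable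
  have hconv (n : ℕ) : ∑ k ∈ range (n + 1), f k * g (n - k) = t * ((y * t) ^ n / (n ! : ℝ)) := by
    have hk : ∀ k ∈ range (n + 1), f k * g (n - k) =
        t ^ (n + 1) * (bernoulliFun k y / (k ! : ℝ) * (1 / (n + 1 - k)!)) := fun k hk => by
      have hkn : k ≤ n := by rw [mem_range] at hk; omega
      have hsucc : n - k + 1 = n + 1 - k := by omega
      simp only [f, g, hsucc]
      rw [← Nat.add_sub_cancel' (by omega : k ≤ n + 1), pow_add, Nat.add_sub_cancel_left]
      ring
    rw [sum_congr rfl hk, ← mul_sum, sum_range_bernoulliFun_div_factorial_mul]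
    ring
  have hprod := hasSum_sum_range_mul_of_summable_norm hf hg_norm
  simp_rw [hconv, hg.tsum_eq] at hprod
  have hval : (∑' n, f n) * (exp t - 1) = t * exp (y * t) :=
    hprod.unique ((hexp (y * t)).mul_left t)
  have hne : exp t - 1 ≠ 0 := sub_ne_zero.mpr (by simpa using ht₀)
  rw [← hval, mul_div_cancel_right₀ _ hne]
  exact hf.of_norm.hasSum

theorem hasSum_bernoulliFun_succ_mul_neg_log_pow {a : ℝ} (ha : 0 < a) (ha₁ : a ≠ 1)
    (hlog : |log a| < 2 * π) {y : ℝ} (hy : y ∈ Set.Icc (0 : ℝ) 1) :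
    HasSum (fun k => bernoulliFun (k + 1) y * (-log a) ^ (k + 1) / ((k + 1)! : ℝ))
      (log a * a ^ (1 - y) / (a - 1) - 1) := by
  have hlog₀ : log a ≠ 0 := log_ne_zero_of_pos_of_ne_one ha ha₁
  have h := (hasSum_nat_add_iff' 1).mpr <| hasSum_bernoulliFun_mul_pow_div_factorial
    (neg_ne_zero.mpr hlog₀) (by rwa [abs_neg]) hy
  have hexp : exp (-log a) = a⁻¹ := by rw [exp_neg, exp_log ha]
  have hexp_mul : exp (y * -log a) = a ^ (-y) := by rw [rpow_def_of_pos ha]; ring_nf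
  have hpow : a ^ (1 - y) = a * a ^ (-y) := by rw [sub_eq_add_neg, rpow_add ha, rpow_one]
  have ha₁' : a - 1 ≠ 0 := sub_ne_zero.mpr ha₁
  have ha₁'' : 1 - a ≠ 0 := sub_ne_zero.mpr ha₁.symm
  have hvalue : -log a * exp (y * -log a) / (exp (-log a) - 1) -
      ∑ i ∈ range 1, bernoulliFun i y * (-log a) ^ i / (i ! : ℝ) =
        log a * a ^ (1 - y) / (a - 1) - 1 := by
    rw [hexp, hexp_mul, hpow, sum_range_one, bernoulliFun_zero, pow_zero, factorial_zero,
      cast_one, div_one, mul_one]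
    field_simp
    ring
  rwa [hvalue] at h

theorem geom_sum_floor_sub_eq {a x : ℝ} (ha : 0 < a) (ha₁ : a ≠ 1) (hx : 0 ≤ x) :
    (∑ k ∈ range (⌊x⌋₊ + 1), a ^ k) - 1 / (1 - a) = a ^ x * a ^ (1 - Int.fract x) / (a - 1) := by
  have hpow : a ^ x * a ^ (1 - Int.fract x) = a ^ (⌊x⌋₊ + 1) := by
    rw [← rpow_add ha, ← rpow_natCast, Nat.cast_add_one, natCast_floor_eq_intCast_floor hx,
      ← Int.self_sub_fract]
    ring_nf
  have ha₁' : a - 1 ≠ 0 := sub_ne_zero.mpr ha₁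
  have ha₁'' : 1 - a ≠ 0 := sub_ne_zero.mpr ha₁.symm
  rw [hpow, geom_sum_eq ha₁]
  field_simp
  ring

/-- The Euler–Maclaurin geometric summation formula. -/
theorem euler_maclaurin_geometric (a : ℝ) (ha₀ : Real.exp (-(2 * Real.pi)) < a)
    (ha₁ : a < Real.exp (2 * Real.pi)) (ha₂ : a ≠ 1) (x : ℝ) (hx : 0 < x) :
    (Summable fun k : ℕ =>
      |a ^ x * ((-1 : ℝ) ^ (k + 1) * Real.log a ^ k / Nat.factorial (k + 1) *
        bernoulliPoly (k + 1) (Int.fract x))|) ∧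
    HasSum (fun k : ℕ =>
        a ^ x * ((-1 : ℝ) ^ (k + 1) * Real.log a ^ k / Nat.factorial (k + 1) *
          bernoulliPoly (k + 1) (Int.fract x)))
      ((∑ k ∈ Finset.range (Nat.floor x + 1), a ^ k)
        - a ^ x / Real.log a - 1 / (1 - a)) := by
  have ha : 0 < a := (exp_pos _).trans ha₀
  have hlog : |log a| < 2 * π :=
    abs_lt.mpr ⟨(lt_log_iff_exp_lt ha).mpr ha₀, (log_lt_iff_lt_exp ha).mpr ha₁⟩
  have hlog₀ : log a ≠ 0 := log_ne_zero_of_pos_of_ne_one ha ha₂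
  have hy : Int.fract x ∈ Set.Icc (0 : ℝ) 1 := ⟨Int.fract_nonneg x, (Int.fract_lt_one x).le⟩
  have hterm (k : ℕ) : a ^ x * ((-1 : ℝ) ^ (k + 1) * log a ^ k / (k + 1)! *
      bernoulliFun (k + 1) (Int.fract x)) = a ^ x / log a *
      (bernoulliFun (k + 1) (Int.fract x) * (-log a) ^ (k + 1) / ((k + 1)! : ℝ)) := by
    rw [neg_pow (log a), pow_succ (log a)]
    field_simp
  have hvalue : a ^ x / log a * (log a * a ^ (1 - Int.fract x) / (a - 1) - 1) =
      (∑ k ∈ range (⌊x⌋₊ + 1), a ^ k) - a ^ x / log a - 1 / (1 - a) := by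
    rw [sub_right_comm, geom_sum_floor_sub_eq ha ha₂ hx.le]
    field_simp
  simp_rw [bernoulliPoly_eq_bernoulliFun, hterm]
  refine ⟨?_, hvalue ▸ (hasSum_bernoulliFun_succ_mul_neg_log_pow ha ha₂ hlog hy).mul_left _⟩
  simp_rw [abs_mul]
  exact ((summable_abs_bernoulliFun_mul_pow_div_factorial (by rwa [abs_neg]) hy).comp_injective
    (add_left_injective 1)).mul_left _
end
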